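/- Every Jacobi matrix x ∈ M(n) is strongly regular. -/

import Mathlib

open Matrix Polynomial

noncomputable section

attribute [local instance] Matrix.normedAddCommGroup Matrix.normedSpace

def d (k : ℕ) : ℕ := k * (k + 1) / 2

def cutoff {n : ℕ} (x : Matrix (Fin n) (Fin n) ℂ) {m : ℕ} (h : m ≤ n) :
    Matrix (Fin m) (Fin m) ℂ :=
  Matrix.of fun i j => x (Fin.castLE h i) (Fin.castLE h j)

def Phi (n : ℕ) (x : Matrix (Fin n) (Fin n) ℂ) : (Σ m : Fin n, Fin (m.1 + 1)) → ℂ :=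
  fun p => (-1 : ℂ) ^ (p.1.1 - p.2.1 + 1) * ((cutoff x p.1.2).charpoly.coeff p.2.1)

def StronglyRegular {n : ℕ} (x : Matrix (Fin n) (Fin n) ℂ) : Prop :=
  Function.Surjective (fderiv ℂ (Phi n) x)

def InEB {n : ℕ} (x : Matrix (Fin n) (Fin n) ℂ) : Prop :=
  (∀ i j : Fin n, i.1 = j.1 + 1 → x i j = -1) ∧
  (∀ i j : Fin n, j.1 + 1 < i.1 → x i j = 0)

def EigDisjoint {n : ℕ} (x : Matrix (Fin n) (Fin n) ℂ) : Prop :=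
  (∀ (m : ℕ) (_ : 1 ≤ m) (hm : m ≤ n), (cutoff x hm).charpoly.roots.toFinset.card = m) ∧
  (∀ (m : ℕ) (_ : 1 ≤ m) (hm : m + 1 ≤ n) (z : ℂ),
    ¬((cutoff x (Nat.le_of_succ_le hm)).charpoly.IsRoot z ∧
      (cutoff x hm).charpoly.IsRoot z))

def embed {n m : ℕ} (h : m ≤ n) (y : Matrix (Fin m) (Fin m) ℂ) :
    Matrix (Fin n) (Fin n) ℂ :=
  Matrix.of fun i j =>
    if hi : i.1 < m then if hj : j.1 < m then y ⟨i.1, hi⟩ ⟨j.1, hj⟩ else 0 else 0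

def GSet {n : ℕ} (x : Matrix (Fin n) (Fin n) ℂ) {m : ℕ} (h : m ≤ n) :
    Set (Matrix (Fin n) (Fin n) ℂ) :=
  {g | IsUnit g ∧
    (∀ i j : Fin n, m ≤ i.1 ∨ m ≤ j.1 → g i j = (1 : Matrix (Fin n) (Fin n) ℂ) i j) ∧
    cutoff g h ∈ Submodule.span ℂ (Set.range fun k : ℕ => (cutoff x h) ^ k)}

def centSubmodule {n : ℕ} (x : Matrix (Fin n) (Fin n) ℂ) :
    Submodule ℂ (Matrix (Fin n) (Fin n) ℂ) where
  carrier := {y | x * y = y * x}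
  add_mem' := fun {a b} ha hb => by
    simp only [Set.mem_setOf_eq] at *
    rw [mul_add, add_mul, ha, hb]
  zero_mem' := by simp
  smul_mem' := fun c a ha => by
    simp only [Set.mem_setOf_eq] at *
    rw [mul_smul_comm, smul_mul_assoc, ha]

def Zsub {n : ℕ} (x : Matrix (Fin n) (Fin n) ℂ) {m : ℕ} (h : m ≤ n) :
    Submodule ℂ (Matrix (Fin n) (Fin n) ℂ) :=
  Submodule.span ℂ (Set.range fun k : ℕ => embed h ((cutoff x h) ^ k))

def IsJacobi {n : ℕ} (x : Matrix (Fin n) (Fin n) ℂ) : Prop :=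
  (∀ i j : Fin n, (i.1 + 1 < j.1 ∨ j.1 + 1 < i.1) → x i j = 0) ∧
  (∀ i j : Fin n, (i.1 + 1 = j.1 ∨ j.1 + 1 = i.1) → x i j ≠ 0)

/-!
Differentiate `Phi n` at `x` in the `d(n)` directions `E a j` (matrix units with `j ≤ a`). Adding
`t • E a j` is a rank-one perturbation, so every component of `Phi n` is affine in `t`, with slope
given by the adjugate of `λ - x_{m+1}`. Hence the coefficients of the cutoff `x_{m+1}` do not move
in the directions with `a > m`, while for `a = m` their derivative is, up to sign, the cofactor
`adj(λ - x_{a+1}) j a`. For a lower Hessenberg matrix this cofactor is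
`± (∏_{j ≤ l < a} x_{l,l+1}) · charpoly(x_j)`, of degree `j` with leading coefficient nonzero
when `x` is Jacobi. So the `d(n) × d(n)` matrix of these derivatives is block lower triangular
with upper triangular diagonal blocks and nonzero diagonal, hence invertible.
-/

open Finset

namespace Matrix

section CommRing

variable {R : Type*} [CommRing R]

theorem charpoly_add_single {ι : Type*} [Fintype ι] [DecidableEq ι]
    (A : Matrix ι ι R) (i j : ι) (c : R) :
    (A + single i j c).charpoly = A.charpoly - C c * adjugate (charmatrix A) j i := by
  have hrow : charmatrix (A + single i j c) =
      (charmatrix A).updateRow i (charmatrix A i + (-C c) • Pi.single j 1) := by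
    ext k l : 1
    simp only [charmatrix_apply, updateRow_apply, add_apply, single_apply, Pi.add_apply,
      Pi.smul_apply, Pi.single_apply, smul_eq_mul, map_add]
    split_ifs <;> grind
  rw [charpoly, hrow, det_updateRow_add, updateRow_eq_self, det_updateRow_smul, adjugate_apply,
    charpoly]
  ring

theorem charmatrix_submatrix {ι κ : Type*} [Fintype ι] [DecidableEq ι] [Fintype κ]
    [DecidableEq κ] (A : Matrix ι ι R) {e : κ → ι} (he : Function.Injective e) :
    charmatrix (A.submatrix e e) = (charmatrix A).submatrix e e := by
  ext k l : 1
  rcases eq_or_ne k l with rfl | hkl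
  · simp
  · simp [charmatrix_apply_ne, hkl, he.ne hkl]

end CommRing

def IsLowerHessenberg {α : Type*} [Zero α] {m : ℕ} (M : Matrix (Fin m) (Fin m) α) : Prop :=
  ∀ i j : Fin m, i.1 + 1 < j.1 → M i j = 0

namespace IsLowerHessenberg

variable {m : ℕ}

theorem submatrix_castLE {α : Type*} [Zero α] {M : Matrix (Fin m) (Fin m) α}
    (hM : M.IsLowerHessenberg) {k : ℕ} (h : k ≤ m) :
    (M.submatrix (Fin.castLE h) (Fin.castLE h)).IsLowerHessenberg :=
  fun i j => hM (Fin.castLE h i) (Fin.castLE h j)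

theorem charmatrix {R : Type*} [CommRing R] {M : Matrix (Fin m) (Fin m) R}
    (hM : M.IsLowerHessenberg) : M.charmatrix.IsLowerHessenberg := fun i j hij => by
  rw [charmatrix_apply_ne _ _ _ (Fin.ne_of_val_ne (by omega)), hM i j hij, map_zero, neg_zero]

end IsLowerHessenberg

theorem det_submatrix_castSucc_succAbove_of_isLowerHessenberg {R : Type*} [CommRing R] {t : ℕ}
    (M : Matrix (Fin (t + 1)) (Fin (t + 1)) R) (hM : M.IsLowerHessenberg) (j : Fin (t + 1)) :
    (M.submatrix Fin.castSucc j.succAbove).det =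
      (∏ l : Fin t with j ≤ l.castSucc, M l.castSucc l.succ) *
        (M.submatrix (Fin.castLE j.isLt.le) (Fin.castLE j.isLt.le)).det := by
  have hlast : ∀ {t : ℕ} (M : Matrix (Fin (t + 1)) (Fin (t + 1)) R),
      (M.submatrix Fin.castSucc (Fin.last t).succAbove).det =
        (∏ l : Fin t with Fin.last t ≤ l.castSucc, M l.castSucc l.succ) *
          (M.submatrix Fin.castSucc Fin.castSucc).det := by
    intro t M
    rw [filter_false_of_mem fun l _ => not_le.2 (Fin.castSucc_lt_last l), prod_empty,
      one_mul, Fin.succAbove_last]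
  induction t with
  | zero =>
    obtain rfl : j = Fin.last 0 := Subsingleton.elim (α := Fin 1) _ _
    exact hlast M
  | succ t ih =>
    induction j using Fin.lastCases with
    | last => exact hlast M
    | cast j =>
      -- expand along the last column, whose only nonzero entry is `M t (t + 1)`
      set N : Matrix (Fin (t + 1)) (Fin (t + 1)) R := M.submatrix Fin.castSucc Fin.castSucc
      have hlastCol : j.castSucc.succAbove (Fin.last t) = Fin.last (t + 1) :=
        Fin.succAbove_of_le_castSucc _ _ (Fin.castSucc_le_castSucc_iff.2 (Fin.le_last j))
      have hminor : (M.submatrix Fin.castSucc j.castSucc.succAbove).submatrix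
          (Fin.last t).succAbove (Fin.last t).succAbove = N.submatrix Fin.castSucc j.succAbove := by
        ext; simp [N, Fin.succAbove_last]
      have hcol : ∀ i : Fin t,
          M.submatrix Fin.castSucc j.castSucc.succAbove i.castSucc (Fin.last t) = 0 :=
        fun i => by simpa [hlastCol] using hM _ _ (by simp)
      rw [det_succ_column _ (Fin.last t), Fin.sum_univ_castSucc,
        sum_eq_zero fun i _ => by rw [hcol, mul_zero, zero_mul], zero_add, hminor,
        ih N (hM.submatrix_castLE (Nat.le_succ _)) j]
      simp only [prod_filter]
      rw [Fin.prod_univ_castSucc, if_pos (Fin.castSucc_le_castSucc_iff.2 (Fin.le_last j))]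
      simp only [Fin.val_last, Even.add_self, Even.neg_pow, one_pow, one_mul, submatrix_apply,
        hlastCol, Fin.castSucc_succ, Fin.castSucc_le_castSucc_iff, Fin.succ_last, N]
      rw [mul_left_comm, ← mul_assoc]
      rfl

section AdjugateCharmatrix

variable {R : Type*} [CommRing R] {t : ℕ} {B : Matrix (Fin (t + 1)) (Fin (t + 1)) R}

theorem adjugate_charmatrix_apply_last (hB : B.IsLowerHessenberg) (j : Fin (t + 1)) :
    adjugate (charmatrix B) j (Fin.last t) =
      C ((-1) ^ (t + j.1) * ∏ l : Fin t with j ≤ l.castSucc, -B l.castSucc l.succ) *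
        (B.submatrix (Fin.castLE j.isLt.le) (Fin.castLE j.isLt.le)).charpoly := by
  have hsup (l : Fin t) : charmatrix B l.castSucc l.succ = -C (B l.castSucc l.succ) :=
    charmatrix_apply_ne _ _ _ Fin.castSucc_lt_succ.ne
  rw [adjugate_fin_succ_eq_det_submatrix, Fin.succAbove_last,
    det_submatrix_castSucc_succAbove_of_isLowerHessenberg _ hB.charmatrix, charpoly,
    charmatrix_submatrix _ (Fin.castLE_injective _)]
  simp only [Fin.val_last, hsup, map_mul, map_pow, map_neg, map_one, map_prod]
  ring

theorem coeff_adjugate_charmatrix_apply_last_of_lt [Nontrivial R] (hB : B.IsLowerHessenberg)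
    (j : Fin (t + 1)) {k : ℕ} (hjk : j.1 < k) :
    (adjugate (charmatrix B) j (Fin.last t)).coeff k = 0 := by
  rw [adjugate_charmatrix_apply_last hB, coeff_C_mul, coeff_eq_zero_of_natDegree_lt, mul_zero]
  simpa using hjk

theorem coeff_adjugate_charmatrix_apply_last_self [Nontrivial R] (hB : B.IsLowerHessenberg)
    (j : Fin (t + 1)) :
    (adjugate (charmatrix B) j (Fin.last t)).coeff j =
      (-1) ^ (t + j.1) * ∏ l : Fin t with j ≤ l.castSucc, -B l.castSucc l.succ := by
  have hmonic := (B.submatrix (Fin.castLE j.isLt.le) (Fin.castLE j.isLt.le)).charpoly_monic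
  rw [adjugate_charmatrix_apply_last hB, coeff_C_mul]
  convert mul_one _
  simpa using hmonic.coeff_natDegree

end AdjugateCharmatrix

theorem det_ne_zero_of_sigma_triangular {R α : Type*} [CommRing R] [IsDomain R] [Fintype α]
    [LinearOrder α] {β : α → Type*} [∀ a, Fintype (β a)] [∀ a, LinearOrder (β a)]
    (M : Matrix (Σ a, β a) (Σ a, β a) R) (hblock : ∀ p r, p.1 < r.1 → M p r = 0)
    (htri : ∀ a (k j : β a), j < k → M ⟨a, k⟩ ⟨a, j⟩ = 0) (hdiag : ∀ p, M p p ≠ 0) :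
    M.det ≠ 0 := by
  classical
  have hbt : Mᵀ.BlockTriangular Sigma.fst := fun p r h => hblock r p h
  rw [← det_transpose, hbt.det]
  refine prod_ne_zero_iff.2 fun a _ => ?_
  rw [← det_reindex_self (Equiv.sigmaSubtype a), det_of_isLowerTriangular]
  · exact prod_ne_zero_iff.2 fun k _ => hdiag _
  · intro k j hkj
    exact htri a _ _ hkj

end Matrix

theorem analyticOnNhd_charpoly_coeff {𝕜 ι : Type*} [NontriviallyNormedField 𝕜] [Fintype ι]
    [DecidableEq ι] (k : ℕ) :
    AnalyticOnNhd 𝕜 (fun A : Matrix ι ι 𝕜 => A.charpoly.coeff k) Set.univ := by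
  intro A _
  have hpoly : (fun A : Matrix ι ι 𝕜 => A.charpoly.coeff k) =
      fun A => MvPolynomial.aeval (fun ij => A ij.1 ij.2) ((charpoly.univ 𝕜 ι).coeff k) := by
    funext A
    rw [MvPolynomial.aeval_eq_eval₂Hom, Algebra.algebraMap_self]
    exact (charpoly.univ_coeff_eval₂Hom ι (RingHom.id 𝕜) (fun ij => A ij.1 ij.2) k).symm
  rw [hpoly]
  refine AnalyticAt.aeval_mvPolynomial (fun ij => ?_) _
  exact ((ContinuousLinearMap.proj ij.2 : (ι → 𝕜) →L[𝕜] 𝕜).comp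
      (ContinuousLinearMap.proj ij.1 : Matrix ι ι 𝕜 →L[𝕜] ι → 𝕜)).analyticAt _

theorem fderiv_apply_eq_of_add_smul {𝕜 E F : Type*} [NontriviallyNormedField 𝕜]
    [NormedAddCommGroup E] [NormedSpace 𝕜 E] [NormedAddCommGroup F] [NormedSpace 𝕜 F]
    {f : E → F} {x v : E} {w : F} (hf : DifferentiableAt 𝕜 f x)
    (hline : ∀ t : 𝕜, f (x + t • v) = f x + t • w) : fderiv 𝕜 f x v = w := by
  rw [← hf.lineDeriv_eq_fderiv, lineDeriv]
  simp_rw [hline]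
  simpa using ((hasDerivAt_id (0 : 𝕜)).smul_const w).deriv

theorem LinearMap.surjective_of_isUnit_det {R V ι : Type*} [CommRing R] [AddCommGroup V]
    [Module R V] [Fintype ι] [DecidableEq ι] (L : V →ₗ[R] ι → R) (v : ι → V)
    (h : IsUnit (Matrix.of fun p r => L (v r) p).det) : Function.Surjective L := by
  intro y
  obtain ⟨c, rfl⟩ := Matrix.mulVec_surjective_iff_isUnit.2
    ((Matrix.of fun p r => L (v r) p).isUnit_iff_isUnit_det.2 h) y
  refine ⟨∑ r, c r • v r, ?_⟩
  ext p
  simp [mulVec, dotProduct, mul_comm]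

section Cutoff

variable {n : ℕ}

theorem cutoff_add {m : ℕ} (h : m ≤ n) (x y : Matrix (Fin n) (Fin n) ℂ) :
    cutoff (x + y) h = cutoff x h + cutoff y h :=
  rfl

theorem cutoff_single_castLE {m : ℕ} (h : m ≤ n) (i j : Fin m) (c : ℂ) :
    cutoff (single (Fin.castLE h i) (Fin.castLE h j) c) h = single i j c := by
  ext k l
  simp [cutoff, single_apply, Fin.castLE_inj]

theorem cutoff_single_of_le {m : ℕ} (h : m ≤ n) {i : Fin n} (hi : m ≤ i.1) (j : Fin n)
    (c : ℂ) : cutoff (single i j c) h = 0 := by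
  ext k l
  have : i ≠ Fin.castLE h k := Fin.ne_of_val_ne (by simp; omega)
  simp [cutoff, single_apply, this]

theorem differentiable_cutoff {m : ℕ} (h : m ≤ n) :
    Differentiable ℂ (fun x : Matrix (Fin n) (Fin n) ℂ => cutoff x h) :=
  differentiable_pi.2 fun i => differentiable_pi.2 fun j =>
    ((ContinuousLinearMap.proj (Fin.castLE h j) : (Fin n → ℂ) →L[ℂ] ℂ).comp
      (ContinuousLinearMap.proj (Fin.castLE h i) :
        Matrix (Fin n) (Fin n) ℂ →L[ℂ] Fin n → ℂ)).differentiable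

theorem IsJacobi.isLowerHessenberg_cutoff {x : Matrix (Fin n) (Fin n) ℂ} (hx : IsJacobi x)
    {m : ℕ} (h : m ≤ n) : (cutoff x h).IsLowerHessenberg :=
  fun _ _ hij => hx.1 _ _ (Or.inl hij)

theorem IsJacobi.cutoff_castSucc_succ_ne_zero {x : Matrix (Fin n) (Fin n) ℂ} (hx : IsJacobi x)
    {m : ℕ} (h : m + 1 ≤ n) (l : Fin m) : cutoff x h l.castSucc l.succ ≠ 0 :=
  hx.2 _ _ (Or.inl (by simp))

end Cutoff

section Phi

variable {n : ℕ}

theorem differentiable_Phi_apply (p : Σ m : Fin n, Fin (m.1 + 1)) :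
    Differentiable ℂ (fun x => Phi n x p) :=
  ((differentiableOn_univ.1 (analyticOnNhd_charpoly_coeff _).differentiableOn).comp
    (differentiable_cutoff p.1.isLt)).const_mul _

theorem differentiable_Phi : Differentiable ℂ (Phi n) :=
  differentiable_pi.2 differentiable_Phi_apply

theorem Phi_add_smul_single_of_lt (x : Matrix (Fin n) (Fin n) ℂ)
    {p r : Σ m : Fin n, Fin (m.1 + 1)} (hpr : p.1 < r.1) (t : ℂ) :
    Phi n (x + t • single r.1 (Fin.castLE r.1.isLt r.2) 1) p = Phi n x p := by
  rw [Phi, Phi, smul_single, cutoff_add, cutoff_single_of_le _ hpr, add_zero]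

theorem Phi_add_smul_single_same (x : Matrix (Fin n) (Fin n) ℂ) (a : Fin n) (k j : Fin (a.1 + 1))
    (t : ℂ) :
    Phi n (x + t • single a (Fin.castLE a.isLt j) 1) ⟨a, k⟩ = Phi n x ⟨a, k⟩ +
      t * (-(-1) ^ (a.1 - k.1 + 1) *
        (adjugate (charmatrix (cutoff x a.isLt)) j (Fin.last a)).coeff k) := by
  -- `a` is `Fin.castLE a.isLt (Fin.last a)` up to defeq
  have hcut : cutoff (single a (Fin.castLE a.isLt j) t) a.isLt = single (Fin.last a) j t :=
    cutoff_single_castLE a.isLt (Fin.last a) j t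
  rw [Phi, Phi, smul_single, smul_eq_mul, mul_one, cutoff_add, hcut, charpoly_add_single,
    coeff_sub, coeff_C_mul]
  ring

theorem fderiv_Phi_apply (x v : Matrix (Fin n) (Fin n) ℂ) (p : Σ m : Fin n, Fin (m.1 + 1)) :
    fderiv ℂ (Phi n) x v p = fderiv ℂ (fun y => Phi n y p) x v :=
  congr($(fderiv_apply differentiable_Phi.differentiableAt p) v).symm

theorem fderiv_Phi_single_of_lt (x : Matrix (Fin n) (Fin n) ℂ)
    {p r : Σ m : Fin n, Fin (m.1 + 1)} (hpr : p.1 < r.1) :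
    fderiv ℂ (Phi n) x (single r.1 (Fin.castLE r.1.isLt r.2) 1) p = 0 := by
  rw [fderiv_Phi_apply]
  refine fderiv_apply_eq_of_add_smul (differentiable_Phi_apply p x) fun t => ?_
  rw [Phi_add_smul_single_of_lt x hpr, smul_zero, add_zero]

theorem fderiv_Phi_single_same (x : Matrix (Fin n) (Fin n) ℂ) (a : Fin n) (k j : Fin (a.1 + 1)) :
    fderiv ℂ (Phi n) x (single a (Fin.castLE a.isLt j) 1) ⟨a, k⟩ =
      -(-1) ^ (a.1 - k.1 + 1) *
        (adjugate (charmatrix (cutoff x a.isLt)) j (Fin.last a)).coeff k := by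
  rw [fderiv_Phi_apply]
  exact fderiv_apply_eq_of_add_smul (differentiable_Phi_apply _ x) fun t => by
    rw [Phi_add_smul_single_same, smul_eq_mul]

end Phi

/-- Every Jacobi matrix is strongly regular. -/
theorem stmt9 (n : ℕ) (x : Matrix (Fin n) (Fin n) ℂ) (hx : IsJacobi x) :
    StronglyRegular x := by
  refine LinearMap.surjective_of_isUnit_det (fderiv ℂ (Phi n) x).toLinearMap
    (fun r : Σ m : Fin n, Fin (m.1 + 1) => single r.1 (Fin.castLE r.1.isLt r.2) 1)
    (isUnit_iff_ne_zero.2 ?_)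
  refine det_ne_zero_of_sigma_triangular _ (fun p r hpr => fderiv_Phi_single_of_lt x hpr)
    (fun a k j hjk => ?_) fun ⟨a, k⟩ => ?_
  · rw [of_apply, ContinuousLinearMap.coe_coe, fderiv_Phi_single_same,
      coeff_adjugate_charmatrix_apply_last_of_lt (hx.isLowerHessenberg_cutoff _) _ hjk, mul_zero]
  · rw [of_apply, ContinuousLinearMap.coe_coe, fderiv_Phi_single_same,
      coeff_adjugate_charmatrix_apply_last_self (hx.isLowerHessenberg_cutoff _)]
    simp [prod_ne_zero_iff, hx.cutoff_castSucc_succ_ne_zero]
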